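/- Let a, c > 0 and b ∈ ℝ, and set β := b/√(ac). For all n, m ∈ ℕ, the operator h p = (1/2)·(x·∂x p + y·∂y p + p) − β·∂x∂y p satisfies h u_{n,m} = (1/2)·(m + n + 1) · u_{n,m}; i.e., the polynomials u_{n,m} are weight vectors of the Cartan generator h with weight (m+n+1)/2. -/

import Mathlib

open MvPolynomial Finset

/-- The polynomial
`u_{n,m} = Σ_{k=0}^{min(n,m)} (−1)^k k! C(n,k) C(m,k) a^{(n−k)/2} b^k c^{(m−k)/2} x^{m−k} y^{n−k}`
in the variables `x = X 0`, `y = X 1`, where the powers of `a` and `c` are real powers. -/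
noncomputable def uPoly (a b c : ℝ) (n m : ℕ) : MvPolynomial (Fin 2) ℝ :=
  ∑ k ∈ range (min n m + 1),
    C ((-1 : ℝ) ^ k * (k.factorial : ℝ) * (n.choose k : ℝ) * (m.choose k : ℝ) *
        a ^ (((n - k : ℕ) : ℝ) / 2) * b ^ k * c ^ (((m - k : ℕ) : ℝ) / 2)) *
      X 0 ^ (m - k) * X 1 ^ (n - k)

/-!
Write `h = ½(E + 1) − β ∂x∂y` with `E = x∂x + y∂y` the Euler operator, and `u_{n,m} = Σ t_k` with
`t_k` the `k`-th summand. The operator `½(E + 1)` multiplies `t_k` by `(m + n + 1)/2 − k`, and the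
coefficients of `u_{n,m}` are exactly those for which `β ∂x∂y t_k = −(k + 1) t_{k+1}` (using
`(k + 1) C(n, k+1) = (n − k) C(n, k)` and `β √a √c = b`). Hence
`(h − (m + n + 1)/2) t_k = (k + 1) t_{k+1} − k t_k`, which telescopes to zero: the boundary terms
carry the factor `0` at `k = 0` and the vanishing binomial `C(min n m, min n m + 1)` at the top.
-/

section Monomial

variable {R : Type*} [CommRing R] (p q : ℕ)

theorem pderiv_zero_X_pow_mul_X_pow :
    pderiv 0 (X 0 ^ p * X 1 ^ q : MvPolynomial (Fin 2) R) =
      (p : R) • (X 0 ^ (p - 1) * X 1 ^ q) := by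
  simp [Algebra.smul_def]
  ring

theorem pderiv_one_X_pow_mul_X_pow :
    pderiv 1 (X 0 ^ p * X 1 ^ q : MvPolynomial (Fin 2) R) =
      (q : R) • (X 0 ^ p * X 1 ^ (q - 1)) := by
  simp [Algebra.smul_def]
  ring

theorem X_zero_mul_pderiv_zero_X_pow_mul_X_pow :
    X 0 * pderiv 0 (X 0 ^ p * X 1 ^ q : MvPolynomial (Fin 2) R) =
      (p : R) • (X 0 ^ p * X 1 ^ q) := by
  rw [pderiv_zero_X_pow_mul_X_pow, mul_smul_comm]
  cases p with
  | zero => simp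
  | succ p => rw [Nat.add_sub_cancel, pow_succ']; ring_nf

theorem X_one_mul_pderiv_one_X_pow_mul_X_pow :
    X 1 * pderiv 1 (X 0 ^ p * X 1 ^ q : MvPolynomial (Fin 2) R) =
      (q : R) • (X 0 ^ p * X 1 ^ q) := by
  rw [pderiv_one_X_pow_mul_X_pow, mul_smul_comm]
  cases q with
  | zero => simp
  | succ q => rw [Nat.add_sub_cancel, pow_succ']; ring_nf

theorem pderiv_zero_pderiv_one_X_pow_mul_X_pow :
    pderiv 0 (pderiv 1 (X 0 ^ p * X 1 ^ q : MvPolynomial (Fin 2) R)) =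
      (p * q : R) • (X 0 ^ (p - 1) * X 1 ^ (q - 1)) := by
  rw [pderiv_one_X_pow_mul_X_pow, Derivation.map_smul, pderiv_zero_X_pow_mul_X_pow, smul_smul,
    mul_comm]

end Monomial

noncomputable def cartanH (β : ℝ) : Module.End ℝ (MvPolynomial (Fin 2) ℝ) :=
  (1 / 2 : ℝ) • (LinearMap.mulLeft ℝ (X 0) ∘ₗ (pderiv 0).toLinearMap +
      LinearMap.mulLeft ℝ (X 1) ∘ₗ (pderiv 1).toLinearMap + LinearMap.id) -
    β • ((pderiv 0).toLinearMap ∘ₗ (pderiv 1).toLinearMap)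

theorem cartanH_apply (β : ℝ) (f : MvPolynomial (Fin 2) ℝ) :
    cartanH β f = C (1 / 2 : ℝ) * (X 0 * pderiv 0 f + X 1 * pderiv 1 f + f) -
      C β * pderiv 0 (pderiv 1 f) := by
  simp [cartanH, smul_eq_C_mul, mul_add]

theorem cartanH_X_pow_mul_X_pow (β : ℝ) (p q : ℕ) :
    cartanH β (X 0 ^ p * X 1 ^ q) =
      ((p + q + 1) / 2 : ℝ) • (X 0 ^ p * X 1 ^ q) -
        (β * p * q) • (X 0 ^ (p - 1) * X 1 ^ (q - 1)) := by
  simp only [cartanH, LinearMap.sub_apply, LinearMap.smul_apply, LinearMap.add_apply,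
    LinearMap.comp_apply, LinearMap.mulLeft_apply, Derivation.coeFn_coe, LinearMap.id_apply,
    X_zero_mul_pderiv_zero_X_pow_mul_X_pow, X_one_mul_pderiv_one_X_pow_mul_X_pow,
    pderiv_zero_pderiv_one_X_pow_mul_X_pow]
  module

theorem rpow_natSub_div_two_eq_sqrt_mul {a : ℝ} (ha : 0 < a) {n k : ℕ} (hk : k < n) :
    a ^ (((n - k : ℕ) : ℝ) / 2) = √a * a ^ (((n - (k + 1) : ℕ) : ℝ) / 2) := by
  rw [Real.sqrt_eq_rpow, ← Real.rpow_add ha, Nat.cast_sub hk.le, Nat.cast_sub hk]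
  push_cast
  ring_nf

noncomputable def uCoeff (a b c : ℝ) (n m k : ℕ) : ℝ :=
  (-1 : ℝ) ^ k * (k.factorial : ℝ) * (n.choose k : ℝ) * (m.choose k : ℝ) *
    a ^ (((n - k : ℕ) : ℝ) / 2) * b ^ k * c ^ (((m - k : ℕ) : ℝ) / 2)

noncomputable def uTerm (a b c : ℝ) (n m k : ℕ) : MvPolynomial (Fin 2) ℝ :=
  uCoeff a b c n m k • (X 0 ^ (m - k) * X 1 ^ (n - k))

theorem uPoly_eq_sum_uTerm (a b c : ℝ) (n m : ℕ) :
    uPoly a b c n m = ∑ k ∈ range (min n m + 1), uTerm a b c n m k := by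
  simp only [uPoly, uTerm, uCoeff, smul_eq_C_mul, mul_assoc]

theorem uCoeff_eq_zero_of_min_lt (a b c : ℝ) (n m : ℕ) {k : ℕ} (hk : min n m < k) :
    uCoeff a b c n m k = 0 := by
  rcases min_lt_iff.mp hk with h | h <;> simp [uCoeff, Nat.choose_eq_zero_of_lt h]

theorem uCoeff_recurrence {a c : ℝ} (b : ℝ) (ha : 0 < a) (hc : 0 < c) (n m k : ℕ) :
    b / √(a * c) * ((n - k : ℕ) * (m - k : ℕ)) * uCoeff a b c n m k =
      -((k + 1) * uCoeff a b c n m (k + 1)) := by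
  by_cases hk : k < min n m
  · rw [lt_min_iff] at hk
    have hn : (n.choose (k + 1) : ℝ) * (k + 1) = n.choose k * (n - k : ℕ) := by
      exact_mod_cast Nat.choose_succ_right_eq n k
    have hm : (m.choose (k + 1) : ℝ) * (k + 1) = m.choose k * (m - k : ℕ) := by
      exact_mod_cast Nat.choose_succ_right_eq m k
    have hsa : √a ≠ 0 := (Real.sqrt_pos.mpr ha).ne'
    have hsc : √c ≠ 0 := (Real.sqrt_pos.mpr hc).ne'
    simp only [uCoeff]
    rw [Real.sqrt_mul ha.le, rpow_natSub_div_two_eq_sqrt_mul ha hk.1,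
      rpow_natSub_div_two_eq_sqrt_mul hc hk.2, Nat.factorial_succ]
    field_simp
    push_cast
    linear_combination (-(-1) ^ k * k.factorial * b ^ (k + 1) : ℝ) *
      ((m.choose (k + 1) * (k + 1) : ℝ) * hn + (n.choose k * (n - k : ℕ) : ℝ) * hm)
  · have hle : min n m ≤ k := not_lt.mp hk
    rw [uCoeff_eq_zero_of_min_lt a b c n m (Nat.lt_succ_of_le hle)]
    rcases min_le_iff.mp hle with h | h <;> simp [Nat.sub_eq_zero_of_le h]

theorem cartanH_uTerm {a c β : ℝ} (b : ℝ) (ha : 0 < a) (hc : 0 < c) (hβ : β = b / √(a * c))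
    {n m k : ℕ} (hk : k ≤ min n m) :
    cartanH β (uTerm a b c n m k) - (((m + n + 1 : ℕ) : ℝ) / 2) • uTerm a b c n m k =
      ((k + 1 : ℕ) : ℝ) • uTerm a b c n m (k + 1) - (k : ℝ) • uTerm a b c n m k := by
  have hrec := uCoeff_recurrence b ha hc n m k
  rw [← hβ] at hrec
  rw [le_min_iff] at hk
  simp only [uTerm, map_smul, cartanH_X_pow_mul_X_pow, Nat.sub_sub]
  rw [Nat.cast_sub hk.1, Nat.cast_sub hk.2] at hrec ⊢
  push_cast
  linear_combination (norm := module)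
    (-hrec) • (X 0 ^ (m - (k + 1)) * X 1 ^ (n - (k + 1)) : MvPolynomial (Fin 2) ℝ)

/-- The polynomials `u_{n,m}` are weight vectors of the Cartan generator
`h p = (1/2)·(x·∂x p + y·∂y p + p) − β·∂x∂y p` with weight `(m+n+1)/2`,
where `β = b/√(ac)`. -/
theorem uPoly_weight_vector (a b c β : ℝ) (ha : 0 < a) (hc : 0 < c)
    (hβ : β = b / Real.sqrt (a * c)) (n m : ℕ) :
    C (1 / 2 : ℝ) * (X 0 * pderiv 0 (uPoly a b c n m) + X 1 * pderiv 1 (uPoly a b c n m) +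
        uPoly a b c n m) - C β * pderiv 0 (pderiv 1 (uPoly a b c n m)) =
      C (((m + n + 1 : ℕ) : ℝ) / 2) * uPoly a b c n m := by
  rw [← cartanH_apply, ← smul_eq_C_mul, ← sub_eq_zero, uPoly_eq_sum_uTerm, map_sum, smul_sum,
    ← sum_sub_distrib]
  rw [sum_congr rfl fun k hk ↦ cartanH_uTerm b ha hc hβ (Nat.lt_succ_iff.mp (mem_range.mp hk))]
  rw [sum_range_sub (fun k ↦ (k : ℝ) • uTerm a b c n m k)]
  have hlast : uTerm a b c n m (min n m + 1) = 0 := by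
    rw [uTerm, uCoeff_eq_zero_of_min_lt a b c n m (Nat.lt_succ_self _), zero_smul]
  simp [hlast]
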